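/- arXiv:1908.03672 — 3 statements merged into one kernel-verified Lean document; each statement's English description precedes it below -/
import Mathlib

section
/- Let $n \ge 2$, let $A$ be a $\mathbb{Z}[W]$-module, and let $\zeta \in Z^n(W,A)$ be a collapsing $n$-cocycle. For $s \in S$ set $a_s := \zeta(s,\ldots,s)$. If $s, s' \in S$ and $w \in W$ satisfy $wsw^{-1} = s'$ and $|ws| > |w|$, then $w \cdot a_s = a_{s'}$. -/
/-!
Write `s = sᵢ`, `s' = sᵢ'`, so that `s' w = w s`. Apply the cocycle identity to the
`(n+1)`-tuples `(s'^k, w, s^(n-k))` for `k = 0, …, n`. Every contraction `s' s'` or `s s`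
produces an entry `1`, and every face `(s'^k, w, s^(n-k-1))` contains the length-additive
pair `(w, s)` or `(s', w)`, so a collapsing cocycle kills all of these terms. What is left
says that the values of `ζ` on the tuples `(s'^k, ws, s^(n-k-1))` are all equal, to
`w • ζ(s, …, s)` at `k = 0` and to `ζ(s', …, s')` at `k = n - 1`.
-/

open CoxeterSystem

variable {B W : Type*} [Group W] {M : CoxeterMatrix B}

/-- Given an `(n+1)`-tuple `(x₀, …, xₙ)`, the `n`-tuple obtained by multiplying the
`j`-th and `(j+1)`-st entries: `(x₀, …, x_{j-1}, x_j · x_{j+1}, x_{j+2}, …, xₙ)`. -/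
def contract {n : ℕ} (x : Fin (n + 1) → W) (j : Fin n) : Fin n → W :=
  fun i =>
    if (i : ℕ) < (j : ℕ) then x i.castSucc
    else if i = j then x i.castSucc * x i.succ
    else x i.succ

/-- `ζ` is an `n`-cocycle for the group cohomology of `W` with coefficients in the
abelian group `A` with trivial `W`-action: `(δζ) = 0`. -/
def IsCocycle {A : Type*} [AddCommGroup A] (n : ℕ) (ζ : (Fin n → W) → A) : Prop :=
  ∀ x : Fin (n + 1) → W,
    ζ (x ∘ Fin.succ)
      + ∑ j : Fin n, ((-1 : ℤ) ^ ((j : ℕ) + 1)) • ζ (contract x j)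
      + ((-1 : ℤ) ^ (n + 1)) • ζ (x ∘ Fin.castSucc) = 0

/-- `ζ` is an `n`-cocycle for the group cohomology of `W` with coefficients in the
`ℤ[W]`-module `A`: `(δζ) = 0`. -/
def IsCocycleM {A : Type*} [AddCommGroup A] [DistribMulAction W A] (n : ℕ)
    (ζ : (Fin n → W) → A) : Prop :=
  ∀ x : Fin (n + 1) → W,
    x 0 • ζ (x ∘ Fin.succ)
      + ∑ j : Fin n, ((-1 : ℤ) ^ ((j : ℕ) + 1)) • ζ (contract x j)
      + ((-1 : ℤ) ^ (n + 1)) • ζ (x ∘ Fin.castSucc) = 0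

/-- `ζ` is collapsing: it vanishes on tuples where two consecutive entries have
additive lengths. -/
def Collapsing (cs : CoxeterSystem M W) {A : Type*} [AddCommGroup A] (n : ℕ)
    (ζ : (Fin n → W) → A) : Prop :=
  ∀ x : Fin n → W, ∀ i : Fin n, ∀ hi : (i : ℕ) + 1 < n,
    cs.length (x i * x ⟨(i : ℕ) + 1, hi⟩) =
        cs.length (x i) + cs.length (x ⟨(i : ℕ) + 1, hi⟩) →
      ζ x = 0

/-- `ζ` is the canonical cocycle `ε_n^W`: a collapsing `n`-cocycle (trivial coefficients)
taking the value `1` on `(s, …, s)` for every simple reflection `s`. -/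
def IsEps (cs : CoxeterSystem M W) {A : Type*} [AddCommGroup A] [One A] (n : ℕ)
    (ζ : (Fin n → W) → A) : Prop :=
  IsCocycle n ζ ∧ Collapsing cs n ζ ∧ ∀ i : B, ζ (fun _ => cs.simple i) = 1

/-- The prefix product `x₀ ⋯ x_{k-1}`. -/
def pp {n : ℕ} (x : Fin n → W) (k : ℕ) : W := ((List.ofFn x).take k).prod

/-- The tuple `(a, …, a, w, b, …, b)` of length `N`, with `w` in position `k`. -/
def sandwich {α : Type*} (a w b : α) (k N : ℕ) : Fin N → α :=
  fun m => if (m : ℕ) < k then a else if (m : ℕ) = k then w else b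

section Sandwich

variable {α : Type*} (a w b : α) {k N : ℕ}

theorem sandwich_of_lt {m : Fin N} (h : (m : ℕ) < k) : sandwich a w b k N m = a := by
  simp [sandwich, h]

theorem sandwich_of_eq {m : Fin N} (h : (m : ℕ) = k) : sandwich a w b k N m = w := by
  simp [sandwich, h]

theorem sandwich_of_gt {m : Fin N} (h : k < (m : ℕ)) : sandwich a w b k N m = b := by
  simp [sandwich, h.ne', h.not_gt]

theorem sandwich_eq_const_of_le (h : N ≤ k) : sandwich a w b k N = fun _ => a :=
  funext fun m => sandwich_of_lt a w b (by omega)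

theorem sandwich_zero_comp_succ : sandwich a w b 0 (N + 1) ∘ Fin.succ = fun _ => b :=
  funext fun m => sandwich_of_gt a w b (by simp)

theorem sandwich_succ_comp_succ :
    sandwich a w b (k + 1) (N + 1) ∘ Fin.succ = sandwich a w b k N := by
  funext m
  simp only [sandwich, Function.comp_apply, Fin.val_succ]
  split_ifs <;> first | rfl | omega

theorem sandwich_comp_castSucc :
    sandwich a w b k (N + 1) ∘ Fin.castSucc = sandwich a w b k N := by
  funext m
  simp only [sandwich, Function.comp_apply, Fin.val_castSucc]

end Sandwich

section Contract

theorem contract_apply_self {n : ℕ} (x : Fin (n + 1) → W) (j : Fin n) :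
    contract x j j = x j.castSucc * x j.succ := by
  simp [contract]

variable (a w b : W) {k N : ℕ}

theorem contract_sandwich_of_eq {j : Fin N} (hj : (j : ℕ) = k) :
    contract (sandwich a w b k (N + 1)) j = sandwich a (w * b) b k N := by
  funext m
  simp only [contract, sandwich, Fin.val_castSucc, Fin.val_succ, Fin.ext_iff]
  split_ifs <;> first | rfl | omega

theorem contract_sandwich_of_succ_eq {j : Fin N} (hj : (j : ℕ) = k) :
    contract (sandwich a w b (k + 1) (N + 1)) j = sandwich a (a * w) b k N := by
  funext m
  simp only [contract, sandwich, Fin.val_castSucc, Fin.val_succ, Fin.ext_iff]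
  split_ifs <;> first | rfl | omega

end Contract

theorem neg_one_pow_smul_add_neg_one_pow_succ_smul_eq_zero_iff {A : Type*} [AddCommGroup A]
    (p : ℕ) {u v : A} : ((-1 : ℤ) ^ p) • u + ((-1 : ℤ) ^ (p + 1)) • v = 0 ↔ u = v := by
  rcases neg_one_pow_eq_or ℤ p with h | h <;>
    simp [pow_succ, h, add_neg_eq_zero, neg_add_eq_zero]

section Collapsing

variable {A : Type*} [AddCommGroup A] {cs : CoxeterSystem M W} {n : ℕ} {ζ : (Fin n → W) → A}

theorem Collapsing.eq_zero_of_apply_eq_one (hcol : Collapsing cs n ζ) (hn : 2 ≤ n)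
    {x : Fin n → W} {j : Fin n} (hx : x j = 1) : ζ x = 0 := by
  by_cases hj : (j : ℕ) + 1 < n
  · exact hcol x j hj (by simp [hx])
  · have hi : (j : ℕ) - 1 + 1 < n := by omega
    have hsucc : (⟨(j : ℕ) - 1 + 1, hi⟩ : Fin n) = j := Fin.ext (by simp only; omega)
    exact hcol x ⟨(j : ℕ) - 1, by omega⟩ hi (by simp [hsucc, hx])

theorem Collapsing.sandwich_eq_zero (hcol : Collapsing cs n ζ) (hn : 2 ≤ n) {a w b : W}
    (haw : cs.length (a * w) = cs.length a + cs.length w)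
    (hwb : cs.length (w * b) = cs.length w + cs.length b) {k : ℕ} (hk : k < n) :
    ζ (sandwich a w b k n) = 0 := by
  by_cases hk' : k + 1 < n
  · refine hcol _ ⟨k, hk⟩ hk' ?_
    rwa [sandwich_of_eq a w b (m := ⟨k, hk⟩) rfl,
      sandwich_of_gt a w b (m := ⟨k + 1, hk'⟩) (by simp)]
  · have hi : k - 1 + 1 < n := by omega
    refine hcol _ ⟨k - 1, by omega⟩ hi ?_
    rwa [sandwich_of_lt a w b (m := ⟨k - 1, by omega⟩) (by simp only; omega),
      sandwich_of_eq a w b (m := ⟨k - 1 + 1, hi⟩) (by simp only; omega)]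

end Collapsing

section ContractSandwich

variable {A : Type*} [AddCommGroup A] {n : ℕ} {ζ : (Fin n → W) → A} {a w b : W} {k : ℕ}
  {j : Fin n}

theorem apply_contract_sandwich_eq_zero_of_succ_lt
    (hone : ∀ (x : Fin n → W) (j : Fin n), x j = 1 → ζ x = 0) (ha : a * a = 1)
    (hj : (j : ℕ) + 1 < k) : ζ (contract (sandwich a w b k (n + 1)) j) = 0 := by
  refine hone _ j ?_
  rw [contract_apply_self, sandwich_of_lt a w b (by simp; omega),
    sandwich_of_lt a w b (by simp; omega), ha]

theorem apply_contract_sandwich_eq_zero_of_lt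
    (hone : ∀ (x : Fin n → W) (j : Fin n), x j = 1 → ζ x = 0) (hb : b * b = 1)
    (hj : k < (j : ℕ)) : ζ (contract (sandwich a w b k (n + 1)) j) = 0 := by
  refine hone _ j ?_
  rw [contract_apply_self, sandwich_of_gt a w b (by simp; omega),
    sandwich_of_gt a w b (by simp; omega), hb]

end ContractSandwich

namespace IsCocycleM

variable {A : Type*} [AddCommGroup A] [DistribMulAction W A] {a w b : W}

theorem smul_const_eq_sandwich_zero {n : ℕ} {ζ : (Fin n → W) → A} (hcoc : IsCocycleM n ζ)
    (hone : ∀ (x : Fin n → W) (j : Fin n), x j = 1 → ζ x = 0) (hb : b * b = 1)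
    (hn : 0 < n) (hface : ζ (sandwich a w b 0 n) = 0) :
    w • ζ (fun _ => b) = ζ (sandwich a (w * b) b 0 n) := by
  have h := hcoc (sandwich a w b 0 (n + 1))
  rw [sandwich_zero_comp_succ, sandwich_comp_castSucc, hface, smul_zero, add_zero,
    sandwich_of_eq a w b (k := 0) (m := 0) rfl,
    Finset.sum_eq_single_of_mem ⟨0, hn⟩ (Finset.mem_univ _) fun j _ hj => by
      rw [apply_contract_sandwich_eq_zero_of_lt hone hb
        (Nat.pos_of_ne_zero fun h => hj (Fin.ext h)), smul_zero],
    contract_sandwich_of_eq a w b (k := 0) (j := ⟨0, hn⟩) rfl] at h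
  simpa [add_neg_eq_zero] using h

theorem sandwich_eq_sandwich_succ {n : ℕ} {ζ : (Fin n → W) → A} (hcoc : IsCocycleM n ζ)
    (hone : ∀ (x : Fin n → W) (j : Fin n), x j = 1 → ζ x = 0)
    (ha : a * a = 1) (hb : b * b = 1)
    (hab : a * w = w * b) {k : ℕ} (hk : k + 1 < n) (hface : ζ (sandwich a w b k n) = 0)
    (hface' : ζ (sandwich a w b (k + 1) n) = 0) :
    ζ (sandwich a (w * b) b k n) = ζ (sandwich a (w * b) b (k + 1) n) := by
  have hk' : k < n := by omega
  have h := hcoc (sandwich a w b (k + 1) (n + 1))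
  rw [sandwich_succ_comp_succ, sandwich_comp_castSucc, hface, hface', smul_zero, smul_zero,
    zero_add, add_zero,
    Finset.sum_eq_add_of_mem ⟨k, hk'⟩ ⟨k + 1, hk⟩ (Finset.mem_univ _) (Finset.mem_univ _)
      (by simp) fun j _ hj => by
        simp only [ne_eq, Fin.ext_iff] at hj
        rcases lt_or_gt_of_ne hj.1 with hlt | hgt
        · rw [apply_contract_sandwich_eq_zero_of_succ_lt hone ha (by omega), smul_zero]
        · rw [apply_contract_sandwich_eq_zero_of_lt hone hb (by omega), smul_zero],
    contract_sandwich_of_succ_eq a w b (k := k) (j := ⟨k, hk'⟩) rfl,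
    contract_sandwich_of_eq a w b (k := k + 1) (j := ⟨k + 1, hk⟩) rfl, hab] at h
  exact (neg_one_pow_smul_add_neg_one_pow_succ_smul_eq_zero_iff (k + 1)).1 h

theorem sandwich_last_eq_const {m : ℕ} {ζ : (Fin (m + 1) → W) → A}
    (hcoc : IsCocycleM (m + 1) ζ)
    (hone : ∀ (x : Fin (m + 1) → W) (j : Fin (m + 1)), x j = 1 → ζ x = 0) (ha : a * a = 1)
    (hab : a * w = w * b) (hface : ζ (sandwich a w b m (m + 1)) = 0) :
    ζ (sandwich a (w * b) b m (m + 1)) = ζ (fun _ => a) := by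
  have h := hcoc (sandwich a w b (m + 1) (m + 2))
  rw [sandwich_succ_comp_succ, sandwich_comp_castSucc, hface, smul_zero, zero_add,
    sandwich_eq_const_of_le a w b le_rfl,
    Finset.sum_eq_single_of_mem (Fin.last m) (Finset.mem_univ _) fun j _ hj => by
      rw [apply_contract_sandwich_eq_zero_of_succ_lt hone ha
        (by have := Fin.val_lt_last hj; omega), smul_zero],
    contract_sandwich_of_succ_eq a w b (k := m) (j := Fin.last m) rfl, hab] at h
  exact (neg_one_pow_smul_add_neg_one_pow_succ_smul_eq_zero_iff (m + 1)).1 h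

theorem smul_const_eq_const {n : ℕ} {ζ : (Fin n → W) → A} (hcoc : IsCocycleM n ζ)
    (hone : ∀ (x : Fin n → W) (j : Fin n), x j = 1 → ζ x = 0)
    (ha : a * a = 1) (hb : b * b = 1)
    (hab : a * w = w * b) (hn : 0 < n) (hface : ∀ k < n, ζ (sandwich a w b k n) = 0) :
    w • ζ (fun _ => b) = ζ (fun _ => a) := by
  obtain ⟨m, rfl⟩ : ∃ m, n = m + 1 := ⟨n - 1, by omega⟩
  have hchain : ∀ k ≤ m,
      ζ (sandwich a (w * b) b 0 (m + 1)) = ζ (sandwich a (w * b) b k (m + 1)) := by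
    intro k hk
    induction k with
    | zero => rfl
    | succ k ih =>
      rw [ih (by omega), sandwich_eq_sandwich_succ hcoc hone ha hb hab (by omega)
        (hface k (by omega)) (hface (k + 1) (by omega))]
  rw [smul_const_eq_sandwich_zero hcoc hone hb hn (hface 0 hn), hchain m le_rfl,
    sandwich_last_eq_const hcoc hone ha hab (hface m (by omega))]

end IsCocycleM

/-- Let `ζ ∈ Zⁿ(W, A)` be a collapsing cocycle (`n ≥ 2`) valued in a `ℤ[W]`-module `A`,
and set `a_s := ζ(s, …, s)`.  If `w s w⁻¹ = s'` with `s, s'` simple and `|ws| > |w|`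
(i.e. `w D_s^+ = D_{s'}^+`), then `w • a_s = a_{s'}`. -/
theorem smul_const_simple_value (cs : CoxeterSystem M W) (n : ℕ) (hn : 2 ≤ n)
    {A : Type*} [AddCommGroup A] [DistribMulAction W A]
    (ζ : (Fin n → W) → A) (hcoc : IsCocycleM n ζ) (hcol : Collapsing cs n ζ)
    (i i' : B) (w : W) (hconj : w * cs.simple i * w⁻¹ = cs.simple i')
    (hlen : cs.length w < cs.length (w * cs.simple i)) :
    w • ζ (fun _ => cs.simple i) = ζ (fun _ => cs.simple i') := by
  have hab : cs.simple i' * w = w * cs.simple i := by rw [← hconj]; group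
  have hws : cs.length (w * cs.simple i) = cs.length w + 1 :=
    (cs.length_mul_simple w i).resolve_right (by omega)
  refine IsCocycleM.smul_const_eq_const hcoc (fun _ _ hx => hcol.eq_zero_of_apply_eq_one hn hx)
    (cs.simple_mul_simple_self i') (cs.simple_mul_simple_self i) hab (by omega)
    fun k hk => hcol.sandwich_eq_zero hn ?_ ?_ hk
  · rw [hab, hws, cs.length_simple]
    omega
  · rw [hws, cs.length_simple]
end

section
/- Let $(W', S') \subset (W, S)$ be a standard parabolic subgroup (i.e., $S' \subset S$ and $W'$ is the subgroup generated by $S'$). Then the restriction of $\epsilon_n^W$ to $(W')^n$ equals $\epsilon_n^{W'}$. -/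
open CoxeterSystem

variable {B W : Type*} [Group W] {M : CoxeterMatrix B}

/-!
The difference `η = ζ ∘ f - ζ'` is again a collapsing cocycle, now on `W'`, and it vanishes on
every `(s, …, s)`; we show that such a cocycle is zero.

If `x_k x_{k+1}` is length-additive, every face of `x` in which `x_k, x_{k+1}` stay adjacent
vanishes, so the cocycle identity at `x` shrinks to `η (d_{k+1} x) = η (d_k x) + η (d_{k+2} x)`.
Splitting `y₀ = u s` along a right descent `s` gives `η y = η (s, y₁, …) + η (u, s y₁, y₂, …)`,
which lowers `ℓ(y₀)` down to `y₀ = 1`, where `η` collapses. A tuple starting with `s, …, s` either collapses at the next entry `t`,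
or `s` is a left descent of `t`; splitting `t = s (s t)` then gives
`η (s, …, s, t, y', …) = η (s, …, s, s, (s t) y', …)`, so the run of `s` grows until the tuple
is `(s, …, s)`.
-/

section Splitting

variable {α : Type*} {n : ℕ} (y : Fin n → α) (k : Fin n) (a b : α)

/-- `(y₀, …, y_{k-1}, a, b, y_{k+1}, …, y_{n-1})` -/
def splitAt : Fin (n + 1) → α := fun i =>
  if h : (i : ℕ) < k then y ⟨i, h.trans k.2⟩
  else if (i : ℕ) = k then a
  else if (i : ℕ) = k + 1 then b
  else y ⟨i - 1, by omega⟩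

theorem splitAt_castSucc_of_lt {j : Fin n} (h : j < k) : splitAt y k a b j.castSucc = y j := by
  simp [splitAt, h]

theorem splitAt_castSucc_self : splitAt y k a b k.castSucc = a := by
  simp [splitAt]

theorem splitAt_succ_self : splitAt y k a b k.succ = b := by
  simp [splitAt]

theorem splitAt_succ_of_lt {j : Fin n} (h : k < j) : splitAt y k a b j.succ = y j := by
  rw [Fin.lt_def] at h
  simp only [splitAt, Fin.val_succ]
  rw [dif_neg (by omega), if_neg (by omega), if_neg (by omega)]
  simp

end Splitting

section Faces

variable {n : ℕ}

/-- The face `d_i x` of the bar complex: `d_0` drops `x₀`, `d_i` for `1 ≤ i ≤ n` replaces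
`x_{i-1}, x_i` by their product, and `d_{n+1}` (as every `d_i` with `i > n`) drops `x_n`. -/
def face (x : Fin (n + 1) → W) (i : ℕ) : Fin n → W := fun j =>
  if (j : ℕ) + 1 < i then x j.castSucc
  else if (j : ℕ) + 1 = i then x j.castSucc * x j.succ
  else x j.succ

variable (x : Fin (n + 1) → W)

theorem face_apply_of_lt {i : ℕ} {j : Fin n} (h : (j : ℕ) + 1 < i) :
    face x i j = x j.castSucc :=
  if_pos h

theorem face_apply_succ (j : Fin n) : face x (j + 1) j = x j.castSucc * x j.succ := by
  simp [face]

theorem face_apply_of_le {i : ℕ} {j : Fin n} (h : i ≤ j) : face x i j = x j.succ := by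
  simp only [face]
  rw [if_neg (by omega), if_neg (by omega)]

theorem face_zero : face x 0 = x ∘ Fin.succ :=
  funext fun _ => face_apply_of_le x (Nat.zero_le _)

theorem face_succ (j : Fin n) : face x (j + 1) = contract x j := by
  funext i
  simp only [face, contract, add_lt_add_iff_right, Nat.add_right_cancel_iff, Fin.ext_iff]

theorem face_last : face x (n + 1) = x ∘ Fin.castSucc :=
  funext fun _ => face_apply_of_lt x (by omega)

theorem face_const_one (i : ℕ) : face (fun _ : Fin (n + 1) => (1 : W)) i = fun _ => 1 := by
  funext j
  simp [face]

theorem face_splitAt (y : Fin n → W) (k : Fin n) (a b : W) :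
    face (splitAt y k a b) (k + 1) = Function.update y k (a * b) := by
  funext j
  rcases lt_trichotomy j k with h | rfl | h
  · rw [face_apply_of_lt _ (by simpa using h), splitAt_castSucc_of_lt _ _ _ _ h,
      Function.update_of_ne h.ne]
  · rw [face_apply_succ, splitAt_castSucc_self, splitAt_succ_self, Function.update_self]
  · rw [face_apply_of_le _ (by simpa using h), splitAt_succ_of_lt _ _ _ _ h,
      Function.update_of_ne h.ne']

end Faces

section CollapsingCocycles

variable {n : ℕ} {A : Type*} [AddCommGroup A] {η : (Fin n → W) → A} {cs : CoxeterSystem M W}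

theorem IsCocycle.sum_face (hc : IsCocycle n η) (x : Fin (n + 1) → W) :
    ∑ i ∈ Finset.range (n + 2), (-1 : ℤ) ^ i • η (face x i) = 0 := by
  rw [Finset.sum_range_succ, Finset.sum_range_succ',
    ← Fin.sum_univ_eq_sum_range (fun j => (-1 : ℤ) ^ (j + 1) • η (face x (j + 1)))]
  simp only [face_zero, face_succ, face_last, pow_zero, one_smul]
  rw [← hc x]
  abel

theorem Collapsing.apply_eq_zero (hcol : Collapsing cs n η) (y : Fin n → W) (p : ℕ)
    (hp : p + 1 < n) {a b : W} (ha : y ⟨p, by omega⟩ = a) (hb : y ⟨p + 1, hp⟩ = b)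
    (hab : cs.length (a * b) = cs.length a + cs.length b) : η y = 0 :=
  hcol y ⟨p, by omega⟩ hp (ha ▸ hb ▸ hab)

theorem Collapsing.apply_eq_zero_of_eq_one (hcol : Collapsing cs n η) (y : Fin n → W)
    (p : ℕ) (hp : p + 1 < n) (hy : y ⟨p, by omega⟩ = 1) : η y = 0 :=
  hcol.apply_eq_zero y p hp hy rfl (by simp)

theorem Collapsing.face_eq_zero (hcol : Collapsing cs n η) (x : Fin (n + 1) → W) (k : Fin n)
    (hadd : cs.length (x k.castSucc * x k.succ) =
      cs.length (x k.castSucc) + cs.length (x k.succ))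
    {i : ℕ} (hi : i < n + 2) (hik : i < k ∨ (k : ℕ) + 2 < i) : η (face x i) = 0 := by
  rcases hik with hlt | hgt
  · obtain ⟨p, hp⟩ : ∃ p, (k : ℕ) = p + 1 := ⟨k - 1, by omega⟩
    refine hcol.apply_eq_zero _ p (by omega) ?_ ?_ hadd <;>
      rw [face_apply_of_le x (by dsimp only; omega)] <;> congr 1 <;> ext <;> simp [hp]
  · exact hcol.apply_eq_zero _ k (by omega) (face_apply_of_lt x (by dsimp only; omega))
      (face_apply_of_lt x (by dsimp only; omega)) hadd

theorem IsCocycle.face_succ_eq_add (hc : IsCocycle n η) (hcol : Collapsing cs n η)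
    (x : Fin (n + 1) → W) (k : Fin n)
    (hadd : cs.length (x k.castSucc * x k.succ) =
      cs.length (x k.castSucc) + cs.length (x k.succ)) :
    η (face x (k + 1)) = η (face x k) + η (face x (k + 2)) := by
  have hsum := hc.sum_face x
  rw [← Finset.sum_subset (s₁ := ({(k : ℕ), (k : ℕ) + 1, (k : ℕ) + 2} : Finset ℕ))] at hsum
  · rw [Finset.sum_insert (by simp), Finset.sum_pair (by simp)] at hsum
    rcases neg_one_pow_eq_or ℤ (k : ℕ) with h | h <;>
      simp only [pow_succ, h, one_mul, neg_mul, one_smul, neg_smul, neg_neg] at hsum <;>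
      grind
  · intro i
    simp only [Finset.mem_insert, Finset.mem_singleton, Finset.mem_range]
    omega
  · intro i hi hik
    simp only [Finset.mem_insert, Finset.mem_singleton, Finset.mem_range] at hi hik
    rw [hcol.face_eq_zero x k hadd hi (by omega), smul_zero]

theorem IsCocycle.apply_eq_zero_of_forall_le_eq_simple (hc : IsCocycle n η)
    (hcol : Collapsing cs n η) {i : B} (hdiag : η (fun _ => cs.simple i) = 0) {m : ℕ}
    (hm : m < n) (y : Fin n → W) (hy : ∀ j : Fin n, (j : ℕ) ≤ m → y j = cs.simple i) :
    η y = 0 := by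
  by_cases hlast : m + 1 = n
  · rwa [show y = fun _ => cs.simple i from funext fun j => hy j (by omega)]
  have hm1 : m + 1 < n := by omega
  set s := cs.simple i
  set t := y ⟨m + 1, hm1⟩
  by_cases hst : cs.length (s * t) = cs.length s + cs.length t
  · exact hcol.apply_eq_zero y m hm1 (hy _ le_rfl) rfl hst
  have hdesc : cs.length (s * (s * t)) = cs.length s + cs.length (s * t) := by
    have : cs.length (s * t) = cs.length t + 1 ∨ cs.length (s * t) + 1 = cs.length t :=
      cs.length_simple_mul t i
    rw [cs.simple_mul_simple_cancel_left, cs.length_simple]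
    rw [cs.length_simple] at hst
    omega
  set x := splitAt y ⟨m + 1, hm1⟩ s (s * t) with hx
  have hxy : face x (m + 2) = y := (face_splitAt y ⟨m + 1, hm1⟩ s (s * t)).trans
    (by rw [cs.simple_mul_simple_cancel_left, Function.update_eq_self])
  have h3 : η (face x (m + 2)) = η (face x (m + 1)) + η (face x (m + 3)) :=
    hc.face_succ_eq_add hcol x ⟨m + 1, hm1⟩
      (by rwa [hx, splitAt_castSucc_self, splitAt_succ_self])
  have h1 : η (face x (m + 1)) = 0 := by
    refine hcol.apply_eq_zero_of_eq_one _ m hm1 ?_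
    have hsucc : (⟨m, hm⟩ : Fin n).succ = (⟨m + 1, hm1⟩ : Fin n).castSucc := rfl
    rw [face_apply_succ x ⟨m, hm⟩, hsucc, hx, splitAt_castSucc_self,
      splitAt_castSucc_of_lt _ _ _ _ (Fin.mk_lt_mk.mpr m.lt_succ_self), hy _ le_rfl,
      cs.simple_mul_simple_self]
  have h2 : η (face x (m + 3)) = 0 := by
    refine hc.apply_eq_zero_of_forall_le_eq_simple hcol hdiag hm1 _ fun j hj => ?_
    rw [face_apply_of_lt x (by omega), hx]
    rcases hj.lt_or_eq with hj | hj
    · rw [splitAt_castSucc_of_lt _ _ _ _ (Fin.mk_lt_mk.mpr hj), hy j (by omega)]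
    · rw [show j = ⟨m + 1, hm1⟩ from Fin.ext hj, splitAt_castSucc_self]
  rw [← hxy, h3, h1, h2, add_zero]
termination_by n - m

end CollapsingCocycles

section Uniqueness

variable {n : ℕ} {A : Type*} [AddCommGroup A] {η : (Fin (n + 1) → W) → A}
  {cs : CoxeterSystem M W}

theorem IsCocycle.apply_eq_zero_of_head_eq_one (hc : IsCocycle (n + 1) η)
    (hcol : Collapsing cs (n + 1) η) (y : Fin (n + 1) → W) (hy : y 0 = 1) : η y = 0 := by
  cases n with
  | zero =>
    rw [show y = fun _ => 1 from funext fun j => by rw [Subsingleton.elim (α := Fin 1) j 0, hy]]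
    have h := hc.face_succ_eq_add hcol (fun _ => 1) 0 (by simp)
    simp only [face_const_one] at h
    exact left_eq_add.mp h
  | succ n => exact hcol.apply_eq_zero_of_eq_one y 0 (by omega) hy

theorem IsCocycle.eq_zero_of_collapsing (hc : IsCocycle (n + 1) η)
    (hcol : Collapsing cs (n + 1) η) (hdiag : ∀ i, η (fun _ => cs.simple i) = 0)
    (y : Fin (n + 1) → W) : η y = 0 := by
  by_cases hy : y 0 = 1
  · exact hc.apply_eq_zero_of_head_eq_one hcol y hy
  obtain ⟨i, hi⟩ := cs.exists_rightDescent_of_ne_one hy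
  have hlen := cs.isRightDescent_iff.mp hi
  set x := splitAt y 0 (y 0 * cs.simple i) (cs.simple i) with hx
  have hxy : face x 1 = y := (face_splitAt y 0 _ _).trans
    (by rw [cs.simple_mul_simple_cancel_right, Function.update_eq_self])
  have h3 : η (face x 1) = η (face x 0) + η (face x 2) :=
    hc.face_succ_eq_add hcol x 0 (by
      rw [hx, splitAt_castSucc_self, splitAt_succ_self, cs.simple_mul_simple_cancel_right,
        cs.length_simple]
      omega)
  have h0 : η (face x 0) = 0 := by
    refine hc.apply_eq_zero_of_forall_le_eq_simple hcol (hdiag i) (m := 0) (by omega) _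
      fun j hj => ?_
    rw [show j = 0 from Fin.ext (by simpa using hj), face_apply_of_le x (Nat.zero_le _), hx,
      splitAt_succ_self]
  have h2 : η (face x 2) = 0 := hc.eq_zero_of_collapsing hcol hdiag _
  rw [← hxy, h3, h0, h2, add_zero]
termination_by cs.length (y 0)
decreasing_by
  rw [face_apply_of_lt x (by simp), hx, splitAt_castSucc_self]
  omega

end Uniqueness

section Restriction

variable {n : ℕ} {A : Type*} [AddCommGroup A] {ζ ζ' : (Fin n → W) → A} {W' : Type*} [Group W']

theorem contract_comp (f : W' →* W) (x : Fin (n + 1) → W') (j : Fin n) :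
    contract (f ∘ x) j = f ∘ contract x j := by
  funext i
  simp only [contract, Function.comp_apply]
  split_ifs <;> simp

theorem IsCocycle.comp (hζ : IsCocycle n ζ) (f : W' →* W) : IsCocycle n fun x => ζ (f ∘ x) :=
  fun x => by
  have h := hζ (f ∘ x)
  simp only [contract_comp] at h
  exact h

theorem IsCocycle.sub (hζ : IsCocycle n ζ) (hζ' : IsCocycle n ζ') : IsCocycle n (ζ - ζ') :=
  fun x => by
  have h := congrArg₂ (· - ·) (hζ x) (hζ' x)
  simp only [sub_zero] at h
  simp only [Pi.sub_apply, smul_sub, Finset.sum_sub_distrib]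
  rw [← h]
  abel

variable {B' : Type*} {M' : CoxeterMatrix B'} {cs : CoxeterSystem M W}

theorem Collapsing.comp (hζ : Collapsing cs n ζ) (cs' : CoxeterSystem M' W') (f : W' →* W)
    (hlen : ∀ w, cs.length (f w) = cs'.length w) : Collapsing cs' n fun x => ζ (f ∘ x) :=
  fun x i hi hadd => hζ _ i hi (by simpa only [Function.comp_apply, ← map_mul, hlen] using hadd)

theorem Collapsing.sub (hζ : Collapsing cs n ζ) (hζ' : Collapsing cs n ζ') :
    Collapsing cs n (ζ - ζ') := fun x i hi hadd => by
  simp [hζ x i hi hadd, hζ' x i hi hadd]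

end Restriction

theorem IsEps.comp_eq {n : ℕ} {A : Type*} [AddCommGroup A] [One A] {cs : CoxeterSystem M W}
    {B' W' : Type*} [Group W'] {M' : CoxeterMatrix B'} {cs' : CoxeterSystem M' W'}
    {ζ : (Fin (n + 1) → W) → A} {ζ' : (Fin (n + 1) → W') → A}
    (hζ : IsEps cs (n + 1) ζ) (hζ' : IsEps cs' (n + 1) ζ') (f : W' →* W) (ι : B' → B)
    (hf : ∀ i, f (cs'.simple i) = cs.simple (ι i)) (hlen : ∀ w, cs.length (f w) = cs'.length w)
    (x : Fin (n + 1) → W') : ζ (f ∘ x) = ζ' x := by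
  rw [← sub_eq_zero]
  refine (hζ.1.comp f).sub hζ'.1 |>.eq_zero_of_collapsing
    ((hζ.2.1.comp cs' f hlen).sub hζ'.2.1) (fun i => ?_) x
  simp [Function.comp_def, hf, hζ.2.2, hζ'.2.2]

theorem eps_parabolic_restriction_general (cs : CoxeterSystem M W)
    {B' W' : Type*} [Group W'] {M' : CoxeterMatrix B'} (cs' : CoxeterSystem M' W')
    (f : W' →* W)
    (ι : B' → B)
    (hf : ∀ i : B', f (cs'.simple i) = cs.simple (ι i))
    (hlen : ∀ w : W', cs.length (f w) = cs'.length w)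
    (n : ℕ) (hn : 1 ≤ n) :
    (Even n → ∀ (ζ : (Fin n → W) → ℤ) (ζ' : (Fin n → W') → ℤ),
      IsEps cs n ζ → IsEps cs' n ζ' →
        ∀ x : Fin n → W', ζ (fun k => f (x k)) = ζ' x) ∧
    (Odd n → ∀ (ζ : (Fin n → W) → ZMod 2) (ζ' : (Fin n → W') → ZMod 2),
      IsEps cs n ζ → IsEps cs' n ζ' →
        ∀ x : Fin n → W', ζ (fun k => f (x k)) = ζ' x) := by
  obtain ⟨n, rfl⟩ := Nat.exists_eq_add_of_le' hn
  exact ⟨fun _ _ _ hζ hζ' x => hζ.comp_eq hζ' f ι hf hlen x,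
    fun _ _ _ hζ hζ' x => hζ.comp_eq hζ' f ι hf hlen x⟩

/-- Restriction to a standard parabolic subgroup: let `(W', S')` be a Coxeter system
together with an injective homomorphism `f : W' → W` sending the simple reflections
`S'` injectively into `S` (so `f(W')` is a standard parabolic subgroup of `W`), whose
length function is the restriction of that of `W`.  Then `εₙ^W` restricted to `W'`
equals `εₙ^{W'}`, where each `εₙ` is characterized as the unique collapsing
`n`-cocycle (trivial coefficients: `ℤ` for `n` even, `𝔽₂` for `n` odd) taking the
value `1` on `(s, …, s)` for simple `s`. -/
theorem eps_parabolic_restriction (cs : CoxeterSystem M W)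
    {B' W' : Type*} [Group W'] {M' : CoxeterMatrix B'} (cs' : CoxeterSystem M' W')
    (f : W' →* W) (hfinj : Function.Injective f)
    (ι : B' → B) (hιinj : Function.Injective ι)
    (hf : ∀ i : B', f (cs'.simple i) = cs.simple (ι i))
    (hlen : ∀ w : W', cs.length (f w) = cs'.length w)
    (n : ℕ) (hn : 1 ≤ n) :
    (Even n → ∀ (ζ : (Fin n → W) → ℤ) (ζ' : (Fin n → W') → ℤ),
      IsEps cs n ζ → IsEps cs' n ζ' →
        ∀ x : Fin n → W', ζ (fun k => f (x k)) = ζ' x) ∧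
    (Odd n → ∀ (ζ : (Fin n → W) → ZMod 2) (ζ' : (Fin n → W') → ZMod 2),
      IsEps cs n ζ → IsEps cs' n ζ' →
        ∀ x : Fin n → W', ζ (fun k => f (x k)) = ζ' x) :=
  eps_parabolic_restriction_general cs cs' f ι hf hlen n hn
end

section
/- For all $x, y, z \in W$: (a) $\epsilon_3^W(x,y,z) = 0$ if $xyz = 1$; (b) $\epsilon_3^W(y^{-1},y,z) \equiv \frac{1}{2}(|y|+|z|-|yz|) \pmod 2$; (c) $\epsilon_3^W(x,x^{-1},x) \equiv |x| \pmod 2$; (d) $\epsilon_3^W(x,y,z) = \epsilon_3^W(y,z,(xyz)^{-1})$. -/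
open CoxeterSystem

variable {B W : Type*} [Group W] {M : CoxeterMatrix B}

/-!
Everything comes from the cocycle identity in four arguments, most of whose terms are killed by
the collapsing condition. For a simple reflection `s` this gives `ε(s, w, z) = 1` exactly when `s`
is a left descent of `w` but not of `wz`, and, for `ℓ(sw) = ℓ(w) + 1`, the recursions
`ε((sw)⁻¹, sw, z) = ε(w⁻¹, w, z) + ε(s, sw, z)` and `ε(sw, z, z⁻¹) = ε(w, z, z⁻¹) + ε(s, wz, z⁻¹)`.
These are the recursion satisfied by `½(ℓ y + ℓ z - ℓ (yz))`, which proves (b), (c) and the mirror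
image `ε(y, z, z⁻¹) = ½(ℓ y + ℓ z - ℓ (yz))` of (b). Then (a) is the cocycle identity at
`(x⁻¹, x, y, (xy)⁻¹)` and (d) the one at `(x, y, z, (xyz)⁻¹)`.
-/

section

variable (cs : CoxeterSystem M W)

local prefix:100 "s" => cs.simple
local prefix:100 "ℓ" => cs.length

namespace CoxeterSystem

noncomputable instance (w : W) (i : B) : Decidable (cs.IsLeftDescent w i) :=
  inferInstanceAs (Decidable (_ < _))

theorem isLeftDescent_simple_mul_iff {w : W} {i : B} :
    cs.IsLeftDescent (s i * w) i ↔ ¬cs.IsLeftDescent w i := by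
  rw [isLeftDescent_iff_not_isLeftDescent_mul, simple_mul_simple_cancel_left]

theorem reduced_induction_left {p : W → Prop} (w : W) (one : p 1)
    (mul : ∀ (w : W) (i : B), ¬cs.IsLeftDescent w i → p w → p (s i * w)) : p w := by
  induction hn : ℓ w using Nat.strong_induction_on generalizing w with
  | _ n ih =>
    by_cases hw : w = 1
    · exact hw ▸ one
    obtain ⟨i, hi⟩ := cs.exists_leftDescent_of_ne_one hw
    simpa using mul _ i (cs.isLeftDescent_simple_mul_iff.not_left.mpr hi) (ih _ (hn ▸ hi) _ rfl)

theorem length_simple_mul_of_not_isLeftDescent {w : W} {i : B} (hw : ¬cs.IsLeftDescent w i) :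
    ℓ (s i * w) = ℓ (s i) + ℓ w := by
  rw [length_simple, add_comm, ← not_isLeftDescent_iff]
  exact hw

noncomputable def halfLengthDefect (y z : W) : ℕ := (ℓ y + ℓ z - ℓ (y * z)) / 2

theorem two_mul_halfLengthDefect_add_length_mul (y z : W) :
    2 * cs.halfLengthDefect y z + ℓ (y * z) = ℓ y + ℓ z := by
  have := cs.length_mul_le y z
  have := cs.length_mul_mod_two y z
  unfold halfLengthDefect
  omega

theorem halfLengthDefect_one_left (z : W) : cs.halfLengthDefect 1 z = 0 := by
  simp [halfLengthDefect]

theorem halfLengthDefect_inv_self (x : W) : cs.halfLengthDefect x⁻¹ x = ℓ x := by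
  simp only [halfLengthDefect, inv_mul_cancel, length_inv, length_one]
  omega

theorem halfLengthDefect_inv_mul_add_halfLengthDefect (x y : W) :
    cs.halfLengthDefect x⁻¹ (x * y) + cs.halfLengthDefect x y = ℓ x := by
  have h₁ := cs.two_mul_halfLengthDefect_add_length_mul x⁻¹ (x * y)
  have h₂ := cs.two_mul_halfLengthDefect_add_length_mul x y
  rw [inv_mul_cancel_left, length_inv] at h₁
  omega

theorem halfLengthDefect_simple_mul {w : W} {i : B} (hw : ¬cs.IsLeftDescent w i) (z : W) :
    cs.halfLengthDefect (s i * w) z =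
      cs.halfLengthDefect w z + if cs.IsLeftDescent (w * z) i then 1 else 0 := by
  rw [not_isLeftDescent_iff] at hw
  have h := cs.two_mul_halfLengthDefect_add_length_mul (s i * w) z
  have h' := cs.two_mul_halfLengthDefect_add_length_mul w z
  rw [mul_assoc] at h
  split_ifs with hwz
  · rw [isLeftDescent_iff] at hwz; omega
  · rw [not_isLeftDescent_iff] at hwz; omega

theorem eq_halfLengthDefect_of_simple_mul {R : Type*} [AddMonoidWithOne R] {f : W → W → R}
    (one : ∀ z, f 1 z = 0)
    (mul : ∀ w z i, ¬cs.IsLeftDescent w i →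
      f (s i * w) z = f w z + if cs.IsLeftDescent (w * z) i then 1 else 0)
    (y z : W) : f y z = cs.halfLengthDefect y z := by
  induction y using cs.reduced_induction_left generalizing z with
  | one => simp [one, halfLengthDefect_one_left]
  | mul w i hw ih =>
    rw [mul w z i hw, ih, halfLengthDefect_simple_mul cs hw, Nat.cast_add, Nat.cast_ite,
      Nat.cast_one, Nat.cast_zero]

end CoxeterSystem

section ThreeCochains

variable {A : Type*} [AddCommGroup A] {ζ : (Fin 3 → W) → A}

theorem IsCocycle.apply_three (hc : IsCocycle 3 ζ) (a b c d : W) :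
    ζ ![b, c, d] - ζ ![a * b, c, d] + ζ ![a, b * c, d] - ζ ![a, b, c * d] + ζ ![a, b, c] = 0 := by
  have h := hc ![a, b, c, d]
  have h₀ : contract ![a, b, c, d] 0 = ![a * b, c, d] := by funext i; fin_cases i <;> rfl
  have h₁ : contract ![a, b, c, d] 1 = ![a, b * c, d] := by funext i; fin_cases i <;> rfl
  have h₂ : contract ![a, b, c, d] 2 = ![a, b, c * d] := by funext i; fin_cases i <;> rfl
  have hs : ![a, b, c, d] ∘ Fin.succ = ![b, c, d] := by funext i; fin_cases i <;> rfl
  have hc : ![a, b, c, d] ∘ Fin.castSucc = ![a, b, c] := by funext i; fin_cases i <;> rfl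
  rw [Fin.sum_univ_three, h₀, h₁, h₂, hs, hc] at h
  norm_num at h
  rw [← h]
  abel

theorem Collapsing.eq_zero_of_length_mul₀₁ (hcol : Collapsing cs 3 ζ) {a b : W}
    (h : ℓ (a * b) = ℓ a + ℓ b) (c : W) : ζ ![a, b, c] = 0 :=
  hcol ![a, b, c] 0 (by norm_num) (by simpa using h)

theorem Collapsing.eq_zero_of_length_mul₁₂ (hcol : Collapsing cs 3 ζ) (a : W) {b c : W}
    (h : ℓ (b * c) = ℓ b + ℓ c) : ζ ![a, b, c] = 0 :=
  hcol ![a, b, c] 1 (by norm_num) (by simpa using h)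

theorem Collapsing.apply_one_left (hcol : Collapsing cs 3 ζ) (b c : W) : ζ ![1, b, c] = 0 :=
  hcol.eq_zero_of_length_mul₀₁ cs (by simp) c

theorem Collapsing.apply_one_mid (hcol : Collapsing cs 3 ζ) (a c : W) : ζ ![a, 1, c] = 0 :=
  hcol.eq_zero_of_length_mul₀₁ cs (by simp) c

theorem IsCocycle.apply_mul_of_length_mul (hc : IsCocycle 3 ζ) (hcol : Collapsing cs 3 ζ)
    {a b : W} (h : ℓ (a * b) = ℓ a + ℓ b) (c d : W) :
    ζ ![a * b, c, d] = ζ ![b, c, d] + ζ ![a, b * c, d] := by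
  have h₅ := hc.apply_three a b c d
  rw [hcol.eq_zero_of_length_mul₀₁ cs h, hcol.eq_zero_of_length_mul₀₁ cs h] at h₅
  linear_combination (norm := module) -h₅

end ThreeCochains

section Eps

variable {A : Type*} [AddCommGroup A] [One A] {ζ : (Fin 3 → W) → A}

theorem IsEps.apply_simple_simple (hζ : IsEps cs 3 ζ) (i : B) (w : W) :
    ζ ![s i, s i, w] = if cs.IsLeftDescent w i then 1 else 0 := by
  obtain ⟨hc, hcol, hone⟩ := hζ
  split_ifs with hw
  · have h₅ := hc.apply_three (s i) (s i) (s i) (s i * w)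
    have hsss : ζ ![s i, s i, s i] = 1 := by
      convert hone i using 2; funext j; fin_cases j <;> rfl
    have hred := cs.length_simple_mul_of_not_isLeftDescent
      (cs.isLeftDescent_iff_not_isLeftDescent_mul.mp hw)
    rw [hcol.eq_zero_of_length_mul₁₂ cs _ hred, cs.simple_mul_simple_self,
      hcol.apply_one_left cs, hcol.apply_one_mid cs, cs.simple_mul_simple_cancel_left, hsss] at h₅
    linear_combination (norm := module) -h₅
  · exact hcol.eq_zero_of_length_mul₁₂ cs _ (cs.length_simple_mul_of_not_isLeftDescent hw)

theorem IsEps.apply_simple_simple_mul (hζ : IsEps cs 3 ζ) {i : B} {w : W}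
    (hw : ¬cs.IsLeftDescent w i) (z : W) :
    ζ ![s i, s i * w, z] = if cs.IsLeftDescent (w * z) i then 1 else 0 := by
  have hred := cs.length_simple_mul_of_not_isLeftDescent hw
  have h₅ := hζ.1.apply_three (s i) (s i) w z
  rw [hζ.2.1.eq_zero_of_length_mul₀₁ cs hred, cs.simple_mul_simple_self, hζ.2.1.apply_one_left cs,
    hζ.2.1.eq_zero_of_length_mul₁₂ cs _ hred, hζ.apply_simple_simple] at h₅
  linear_combination (norm := module) h₅

theorem IsEps.apply_simple (hζ : IsEps cs 3 ζ) (i : B) (w z : W) :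
    ζ ![s i, w, z] =
      if cs.IsLeftDescent w i ∧ ¬cs.IsLeftDescent (w * z) i then 1 else 0 := by
  by_cases hw : cs.IsLeftDescent w i
  · have hw' := cs.isLeftDescent_iff_not_isLeftDescent_mul.mp hw
    have := hζ.apply_simple_simple_mul cs hw' z
    rw [cs.simple_mul_simple_cancel_left, mul_assoc] at this
    simp [this, cs.isLeftDescent_simple_mul_iff, hw]
  · rw [if_neg (by tauto)]
    exact hζ.2.1.eq_zero_of_length_mul₀₁ cs (cs.length_simple_mul_of_not_isLeftDescent hw) z

end Eps

section EpsZModTwo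

variable {ζ : (Fin 3 → W) → ZMod 2}

theorem IsEps.apply_inv_self_left (hζ : IsEps cs 3 ζ) (y z : W) :
    ζ ![y⁻¹, y, z] = cs.halfLengthDefect y z := by
  refine cs.eq_halfLengthDefect_of_simple_mul (f := fun y z ↦ ζ ![y⁻¹, y, z])
    (fun z ↦ by simpa using hζ.2.1.apply_one_left cs 1 z) (fun w z i hw ↦ ?_) y z
  have hinv : w⁻¹ * s i = (s i * w)⁻¹ := by rw [mul_inv_rev, cs.inv_simple]
  have hred : ℓ (w⁻¹ * s i) = ℓ w⁻¹ + ℓ (s i) := by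
    rw [hinv, length_inv, length_inv, add_comm]
    exact cs.length_simple_mul_of_not_isLeftDescent hw
  have := hζ.1.apply_mul_of_length_mul cs hζ.2.1 hred (s i * w) z
  rw [hinv, cs.simple_mul_simple_cancel_left, hζ.apply_simple_simple_mul cs hw] at this
  rw [this, add_comm]

theorem IsEps.apply_inv_self_right (hζ : IsEps cs 3 ζ) (a b : W) :
    ζ ![a, b, b⁻¹] = cs.halfLengthDefect a b := by
  refine cs.eq_halfLengthDefect_of_simple_mul (f := fun a b ↦ ζ ![a, b, b⁻¹])
    (fun b ↦ hζ.2.1.apply_one_left cs b b⁻¹) (fun w b i hw ↦ ?_) a b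
  have hred := cs.length_simple_mul_of_not_isLeftDescent hw
  rw [hζ.1.apply_mul_of_length_mul cs hζ.2.1 hred, hζ.apply_simple cs, mul_inv_cancel_right]

  simp only [hw, not_false_eq_true, and_true]

theorem IsEps.apply_eq_zero_of_mul_eq_one (hζ : IsEps cs 3 ζ) {x y z : W} (h : x * y * z = 1) :
    ζ ![x, y, z] = 0 := by
  obtain rfl : z = (x * y)⁻¹ := eq_inv_of_mul_eq_one_right h
  have h₅ := hζ.1.apply_three x⁻¹ x y (x * y)⁻¹
  have hyz : y * (x * y)⁻¹ = x⁻¹ := by group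
  rw [inv_mul_cancel, hζ.2.1.apply_one_left cs, hyz, hζ.apply_inv_self_right cs x⁻¹ (x * y),
    hζ.apply_inv_self_right cs x⁻¹ x, hζ.apply_inv_self_left cs x y, halfLengthDefect_inv_self] at h₅
  have hsum := congrArg (Nat.cast : ℕ → ZMod 2)
    (cs.halfLengthDefect_inv_mul_add_halfLengthDefect x y)
  push_cast at hsum
  linear_combination h₅ - hsum

theorem IsEps.apply_rotate (hζ : IsEps cs 3 ζ) (x y z : W) :
    ζ ![x, y, z] = ζ ![y, z, (x * y * z)⁻¹] := by
  have h₅ := hζ.1.apply_three x y z (x * y * z)⁻¹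
  rw [hζ.apply_eq_zero_of_mul_eq_one cs (x := x * y) (by group),
    hζ.apply_eq_zero_of_mul_eq_one cs (x := x) (y := y * z) (by group),
    hζ.apply_eq_zero_of_mul_eq_one cs (x := x) (y := y) (by group)] at h₅
  rw [← ZMod.neg_eq_self_mod_two (ζ ![y, z, _])]
  linear_combination h₅

end EpsZModTwo

end

/-- Properties of `ε₃^W` (the unique collapsing `3`-cocycle valued in `𝔽₂` with
`ε₃^W(s,s,s) = 1` for all simple `s`):
(a) `ε₃^W(x, y, z) = 0` if `xyz = 1`;
(b) `ε₃^W(y⁻¹, y, z) ≡ ½(|y| + |z| - |yz|) (mod 2)`;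
(c) `ε₃^W(x, x⁻¹, x) ≡ |x| (mod 2)`;
(d) `ε₃^W(x, y, z) = ε₃^W(y, z, (xyz)⁻¹)`. -/
theorem eps_three_properties (cs : CoxeterSystem M W)
    (ζ : (Fin 3 → W) → ZMod 2) (hζ : IsEps cs 3 ζ) :
    (∀ x y z : W, x * y * z = 1 → ζ ![x, y, z] = 0) ∧
    (∀ y z : W, ζ ![y⁻¹, y, z] =
      (((cs.length y + cs.length z - cs.length (y * z)) / 2 : ℕ) : ZMod 2)) ∧
    (∀ x : W, ζ ![x, x⁻¹, x] = (cs.length x : ZMod 2)) ∧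
    (∀ x y z : W, ζ ![x, y, z] = ζ ![y, z, (x * y * z)⁻¹]) := by
  refine ⟨fun x y z ↦ hζ.apply_eq_zero_of_mul_eq_one cs, hζ.apply_inv_self_left cs,
    fun x ↦ ?_, hζ.apply_rotate cs⟩
  simpa [halfLengthDefect_inv_self] using hζ.apply_inv_self_left cs x⁻¹ x
end
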